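/- arXiv:1403.7572 — 3 statements merged into one kernel-verified Lean document; each statement's English description precedes it below -/
import Mathlib

section
/- Let λ ∈ ℂ, let n be a positive integer, and let r > 0 satisfy |λ|·r² < n². Then the function v(r) = r^{−n}·μ_n(r) is differentiable in r and satisfies v′(r) = −(n/r)·√(1 − λr²/n²)·v(r), where √ denotes the principal branch of the complex square root. -/
noncomputable section

/-- `μ_n(r) = exp(n·[Log(√(1 − λr²/n²) + 1) − √(1 − λr²/n²) − Log 2 + 1])`,
where `Log` and `√` (i.e. `cpow (1/2)`) are the principal branches. -/
def mu (lam : ℂ) (n : ℕ) (r : ℝ) : ℂ :=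
  Complex.exp ((n : ℂ) *
    (Complex.log ((1 - lam * (r : ℂ) ^ 2 / (n : ℂ) ^ 2) ^ ((1 : ℂ) / 2) + 1)
      - (1 - lam * (r : ℂ) ^ 2 / (n : ℂ) ^ 2) ^ ((1 : ℂ) / 2)
      - Complex.log 2 + 1))

/-!
Write `w(t) = 1 − λt²/n²` and `s = √w`. Since `d/dz [Log(√z + 1) − √z] = −1/(2(√z + 1))`,
the logarithmic derivative of `μ_n` is `λt / (n(s + 1))`, and `λt²/n² = 1 − s² = (1 − s)(1 + s)`
turns it into `n(1 − s)/t`. Adding the logarithmic derivative `−n/t` of `t^{−n}` leaves `−(n/t)·s`.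
-/

namespace Complex

lemma re_one_sub_pos_of_norm_lt_one {z : ℂ} (hz : ‖z‖ < 1) : 0 < (1 - z).re := by
  simp only [sub_re, one_re]
  linarith [re_le_norm z]

lemma re_cpow_one_half_pos {w : ℂ} (hw : 0 < w.re) : 0 < (w ^ (1 / 2 : ℂ)).re := by
  rw [one_div, cpow_inv_two_re]
  exact Real.sqrt_pos.2 (by linarith [re_le_norm w])

lemma cpow_one_half_mul_self (w : ℂ) : w ^ (1 / 2 : ℂ) * w ^ (1 / 2 : ℂ) = w := by
  rw [← sq, one_div, cpow_ofNat_inv_pow]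

lemma hasDerivAt_log_cpow_one_half_add_one_sub {w : ℂ} (hw : 0 < w.re) :
    HasDerivAt (fun z : ℂ => log (z ^ (1 / 2 : ℂ) + 1) - z ^ (1 / 2 : ℂ))
      (-(2 * (w ^ (1 / 2 : ℂ) + 1))⁻¹) w := by
  have hs : 0 < (w ^ (1 / 2 : ℂ) + 1).re := by
    simp only [add_re, one_re]; linarith [re_cpow_one_half_pos hw]
  have hsqrt : HasDerivAt (fun z : ℂ => z ^ (1 / 2 : ℂ)) (1 / 2 * w ^ (1 / 2 - 1 : ℂ)) w := by
    simpa using (hasDerivAt_id w).cpow_const (Or.inl hw)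
  have hlog := (hsqrt.add_const 1).clog (Or.inl hs)
  have hs_mul : w ^ (1 / 2 : ℂ) * w ^ (1 / 2 - 1 : ℂ) = 1 := by
    rw [← cpow_add _ _ (ne_zero_of_re_pos hw)]; norm_num
  refine (hlog.fun_sub hsqrt).congr_deriv ?_
  have hs_ne := ne_zero_of_re_pos hs
  generalize w ^ (1 / 2 - 1 : ℂ) = t at hs_mul ⊢
  field_simp
  linear_combination -hs_mul

end Complex

open Complex

lemma hasDerivAt_mu {lam : ℂ} {n : ℕ} {r : ℝ} (hn : (n : ℂ) ≠ 0) (hr : (r : ℂ) ≠ 0)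
    (hw : 0 < (1 - lam * (r : ℂ) ^ 2 / (n : ℂ) ^ 2).re) :
    HasDerivAt (mu lam n)
      ((n : ℂ) * (1 - (1 - lam * (r : ℂ) ^ 2 / (n : ℂ) ^ 2) ^ (1 / 2 : ℂ)) / r * mu lam n r) r := by
  have hpoly : HasDerivAt (fun z : ℂ => 1 - lam * z ^ 2 / (n : ℂ) ^ 2)
      (-(lam * (2 * (r : ℂ)) / (n : ℂ) ^ 2)) r := by
    simpa using (((hasDerivAt_pow 2 (r : ℂ)).const_mul lam).div_const ((n : ℂ) ^ 2)).const_sub 1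
  have hexp := (((((hasDerivAt_log_cpow_one_half_add_one_sub hw).comp (r : ℂ) hpoly).sub_const
    (log 2)).add_const 1).const_mul (n : ℂ)).cexp.comp_ofReal
  convert hexp using 1
  · rfl
  set s := (1 - lam * (r : ℂ) ^ 2 / (n : ℂ) ^ 2) ^ (1 / 2 : ℂ)
  have hs1 : s + 1 ≠ 0 :=
    ne_zero_of_re_pos (by simp only [add_re, one_re]; linarith [re_cpow_one_half_pos hw])
  have hkey : lam * (r : ℂ) ^ 2 = (n : ℂ) ^ 2 * (1 - s * s) := by
    rw [cpow_one_half_mul_self]; field_simp; ring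
  change _ = mu lam n r * _
  field_simp
  linear_combination (-mu lam n r) * hkey

theorem stmt11 (lam : ℂ) (n : ℕ) (hn : 0 < n) (r : ℝ) (hr : 0 < r)
    (h : ‖lam‖ * r ^ 2 < (n : ℝ) ^ 2) :
    HasDerivAt (fun t : ℝ => (t : ℂ) ^ (-(n : ℤ)) * mu lam n t)
      (-((n : ℂ) / (r : ℂ)) * (1 - lam * (r : ℂ) ^ 2 / (n : ℂ) ^ 2) ^ ((1 : ℂ) / 2) *
        ((r : ℂ) ^ (-(n : ℤ)) * mu lam n r)) r := by
  have hn0 : (n : ℂ) ≠ 0 := Nat.cast_ne_zero.2 hn.ne'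
  have hr0 : (r : ℂ) ≠ 0 := ofReal_ne_zero.2 hr.ne'
  have hsmall : ‖lam * (r : ℂ) ^ 2 / (n : ℂ) ^ 2‖ < 1 := by
    rw [norm_div, norm_mul, norm_pow, norm_pow, norm_real, Real.norm_of_nonneg hr.le,
      norm_natCast, div_lt_one (by positivity)]
    exact h
  have hzpow : HasDerivAt (fun t : ℝ => (t : ℂ) ^ (-(n : ℤ)))
      (-(n : ℂ) * ((r : ℂ) ^ (-(n : ℤ)) * (r : ℂ)⁻¹)) r := by
    simpa [zpow_sub_one₀ hr0] using (hasDerivAt_zpow (-(n : ℤ)) (r : ℂ) (Or.inl hr0)).comp_ofReal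
  exact (hzpow.fun_mul (hasDerivAt_mu hn0 hr0 (re_one_sub_pos_of_norm_lt_one hsmall))).congr_deriv
    (by ring)
end
end

section
/- Let n, k ≥ 1 be integers with 2n ≥ 5k, set T = π/(n + k), and let f : ℝ → ℝ be continuous, periodic with period T, with −4k ≤ f(φ) ≤ 5k for all φ and ∫₀^T f(φ) dφ = 0. Define Φ(φ) = ∫₀^φ f(t) dt and S(φ) = (2n + 2k)φ + Φ(φ). Then: (i) S(mT) = 2πm for every integer m; (ii) S is strictly increasing, with S(φ₂) − S(φ₁) ≥ n·(φ₂ − φ₁) for all φ₁ ≤ φ₂; (iii) for every integer m and every φ ∈ [mT + T/5, mT + 4T/5], one has 2πm + π/7 ≤ S(φ) ≤ 2π(m + 1) − π/7. -/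
theorem stmt16 (n k : ℕ) (hn : 1 ≤ n) (hk : 1 ≤ k) (hnk : 5 * k ≤ 2 * n)
    (f : ℝ → ℝ) (hf : Continuous f)
    (hper : Function.Periodic f (Real.pi / (n + k)))
    (hbd : ∀ φ : ℝ, -4 * (k : ℝ) ≤ f φ ∧ f φ ≤ 5 * k)
    (hint : (∫ φ in (0 : ℝ)..(Real.pi / (n + k)), f φ) = 0) :
    (∀ m : ℤ, (2 * (n : ℝ) + 2 * k) * ((m : ℝ) * (Real.pi / (n + k)))
        + (∫ t in (0 : ℝ)..((m : ℝ) * (Real.pi / (n + k))), f t) = 2 * Real.pi * m) ∧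
    StrictMono (fun φ : ℝ => (2 * (n : ℝ) + 2 * k) * φ + ∫ t in (0 : ℝ)..φ, f t) ∧
    (∀ φ₁ φ₂ : ℝ, φ₁ ≤ φ₂ →
      (n : ℝ) * (φ₂ - φ₁) ≤
        ((2 * (n : ℝ) + 2 * k) * φ₂ + ∫ t in (0 : ℝ)..φ₂, f t)
          - ((2 * (n : ℝ) + 2 * k) * φ₁ + ∫ t in (0 : ℝ)..φ₁, f t)) ∧
    (∀ m : ℤ, ∀ φ : ℝ,
      (m : ℝ) * (Real.pi / (n + k)) + (Real.pi / (n + k)) / 5 ≤ φ →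
      φ ≤ (m : ℝ) * (Real.pi / (n + k)) + 4 * (Real.pi / (n + k)) / 5 →
      2 * Real.pi * m + Real.pi / 7 ≤
          (2 * (n : ℝ) + 2 * k) * φ + (∫ t in (0 : ℝ)..φ, f t) ∧
        (2 * (n : ℝ) + 2 * k) * φ + (∫ t in (0 : ℝ)..φ, f t) ≤
          2 * Real.pi * (m + 1) - Real.pi / 7) := by
  have hnk0 : (0:ℝ) < (n:ℝ) + k := by positivity
  set T : ℝ := Real.pi / ((n:ℝ) + k) with hTdef
  have hT : 0 < T := div_pos Real.pi_pos hnk0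
  have hint_all : ∀ a b : ℝ, IntervalIntegrable f MeasureTheory.volume a b :=
    fun a b => hf.intervalIntegrable a b
  have hnk' : 2 * (k:ℝ) ≤ (n:ℝ) := by
    have h5 : (5:ℝ) * k ≤ 2 * n := by exact_mod_cast hnk
    have hk1 : (1:ℝ) ≤ (k:ℝ) := by exact_mod_cast hk
    linarith
  have hn1 : (1:ℝ) ≤ (n:ℝ) := by exact_mod_cast hn
  -- (i): value at multiples of T
  have hΦm : ∀ m : ℤ, (∫ t in (0:ℝ)..((m:ℝ) * T), f t) = 0 := by
    intro m
    have h := hper.intervalIntegral_add_zsmul_eq m 0 hint_all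
    simp only [zero_add, zsmul_eq_mul] at h
    rw [h, hint, mul_zero]
  have hi : ∀ m : ℤ, (2 * (n : ℝ) + 2 * k) * ((m : ℝ) * T)
      + (∫ t in (0 : ℝ)..((m : ℝ) * T), f t) = 2 * Real.pi * m := by
    intro m
    rw [hΦm m, add_zero, hTdef]
    field_simp
  -- key estimate
  have hkey : ∀ a b : ℝ, a ≤ b →
      (n : ℝ) * (b - a) ≤
        ((2 * (n : ℝ) + 2 * k) * b + ∫ t in (0 : ℝ)..b, f t)
          - ((2 * (n : ℝ) + 2 * k) * a + ∫ t in (0 : ℝ)..a, f t) := by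
    intro a b hab
    have hsplit : (∫ t in (0:ℝ)..b, f t)
        = (∫ t in (0:ℝ)..a, f t) + ∫ t in a..b, f t :=
      (intervalIntegral.integral_add_adjacent_intervals (hint_all 0 a) (hint_all a b)).symm
    have hlow : (b - a) * (-4 * (k:ℝ)) ≤ ∫ t in a..b, f t := by
      have h := intervalIntegral.integral_mono_on hab
        (intervalIntegrable_const (c := -4 * (k:ℝ))) (hint_all a b)
        (fun x _ => (hbd x).1)
      rwa [intervalIntegral.integral_const, smul_eq_mul] at h
    rw [hsplit]
    nlinarith [sub_nonneg.mpr hab]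
  have hiii : ∀ m : ℤ, ∀ φ : ℝ,
      (m : ℝ) * T + T / 5 ≤ φ → φ ≤ (m : ℝ) * T + 4 * T / 5 →
      2 * Real.pi * m + Real.pi / 7 ≤
          (2 * (n : ℝ) + 2 * k) * φ + (∫ t in (0 : ℝ)..φ, f t) ∧
        (2 * (n : ℝ) + 2 * k) * φ + (∫ t in (0 : ℝ)..φ, f t) ≤
          2 * Real.pi * (m + 1) - Real.pi / 7 := by
    intro m φ h1 h2
    have hstep : Real.pi / 7 ≤ (n:ℝ) * (T / 5) := by
      have heq : (n:ℝ) * (T/5) = (n:ℝ) * Real.pi / (5 * ((n:ℝ) + k)) := by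
        rw [hTdef]; field_simp
      rw [heq, div_le_div_iff₀ (by norm_num) (by positivity)]
      have h5 : (5:ℝ) * k ≤ 2 * n := by exact_mod_cast hnk
      nlinarith [Real.pi_pos]
    constructor
    · have hlow := hkey ((m:ℝ) * T) φ (by nlinarith)
      have := hi m
      nlinarith
    · have hup := hkey φ (((m:ℝ) + 1) * T) (by nlinarith)
      have hival := hi (m + 1)
      push_cast at hival
      nlinarith
  refine ⟨hi, ?_, hkey, hiii⟩
  intro a b hab
  have := hkey a b hab.le
  simp only
  nlinarith [sub_pos.mpr hab]
end

section
/- Let λ ∈ ℂ and set Λ = max{1, |λ|}. There exist constants C > 0 and ρ₀ > 0 (depending only on λ) such that for every ρ ≥ ρ₀ and all natural numbers n, k with |n − 2√Λ·ρ| ≤ 1 and |k − 12√Λ·√ρ| ≤ 1, the following holds. Set d = (ρ + 3√ρ)^{4k}·μ_{n−2k}(ρ + 3√ρ)/μ_{n+2k}(ρ + 3√ρ) and define g(r) = d·r^{−4k}·μ_{n+2k}(r)/μ_{n−2k}(r). Then e^{−C} ≤ |g(r)| ≤ 1 for all r ∈ [ρ + 3√ρ, ρ + 4√ρ]. -/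
/-!
Write `μ_m = exp E_m`; then `log |g(r)| = G(r) - G(s)` with `s = ρ + 3√ρ`, `m = n - 2k` and
`G(r) = Re E_{m+4k}(r) - Re E_m(r) - 4k log r`. Differentiating,
`E_m'(r) = λ r / (m (1 + w_m(r)))` with `w_m = √(1 - λ r²/m²)`. In the window, `3|λ| r² ≤ m²`,
so both square roots have real part `≥ 4/5`; since `(m w_m)² = m² - λ r²`, the quantities
`m w_m` and `(m + 4k) w_{m+4k}` differ by at most `5k`, which makes the difference of the two
`E'` at most `3k/r`. This is beaten by the `4k/r` coming from `r^{-4k}`, so `-7k/r ≤ G' ≤ 0`: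
`G` decreases, and over an interval of length `√ρ` it drops by at most `7k/√ρ ≈ 84 √Λ`.
-/
noncomputable section

open Complex

lemma sqrt_re_le_re_cpow_one_half (z : ℂ) : √z.re ≤ (z ^ ((1 : ℂ) / 2)).re := by
  rw [one_div, cpow_inv_two_re]
  exact Real.sqrt_le_sqrt (by linarith [re_le_norm z])

lemma cpow_one_half_sq (z : ℂ) : (z ^ ((1 : ℂ) / 2)) ^ 2 = z := by
  rw [one_div]; exact cpow_ofNat_inv_pow z 2

lemma one_le_re_cpow_one_half_add_one (z : ℂ) : 1 ≤ (z ^ ((1 : ℂ) / 2) + 1).re := by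
  simpa using (Real.sqrt_nonneg _).trans (sqrt_re_le_re_cpow_one_half z)

lemma cpow_one_half_add_one_mem_slitPlane (z : ℂ) : z ^ ((1 : ℂ) / 2) + 1 ∈ slitPlane :=
  mem_slitPlane_iff.2 (Or.inl (by linarith [one_le_re_cpow_one_half_add_one z]))

lemma hasDerivAt_log_cpow_one_half_add_one_sub {z : ℂ} (hz : z ∈ slitPlane) :
    HasDerivAt (fun ζ : ℂ => log (ζ ^ ((1 : ℂ) / 2) + 1) - ζ ^ ((1 : ℂ) / 2))
      (-1 / (2 * (z ^ ((1 : ℂ) / 2) + 1))) z := by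
  have hw : HasDerivAt (fun ζ : ℂ => ζ ^ ((1 : ℂ) / 2)) (1 / 2 * z ^ ((1 : ℂ) / 2 - 1)) z := by
    simpa using (hasDerivAt_id z).cpow_const (c := (1 : ℂ) / 2) hz
  have hw1 := cpow_one_half_add_one_mem_slitPlane z
  have hz0 : z ≠ 0 := slitPlane_ne_zero hz
  have hinv : z ^ ((1 : ℂ) / 2 - 1) * z ^ ((1 : ℂ) / 2) = 1 := by
    rw [← cpow_add _ _ hz0]; norm_num
  have hne := slitPlane_ne_zero hw1
  refine (((hw.add_const 1).clog hw1).sub hw).congr_deriv ?_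
  generalize z ^ ((1 : ℂ) / 2 - 1) = u at hinv ⊢
  generalize z ^ ((1 : ℂ) / 2) = w at hinv hne ⊢
  field_simp
  linear_combination -hinv

def muRoot (lam : ℂ) (m : ℕ) (x : ℝ) : ℂ :=
  (1 - lam * (x : ℂ) ^ 2 / (m : ℂ) ^ 2) ^ ((1 : ℂ) / 2)

def muExponent (lam : ℂ) (m : ℕ) (x : ℝ) : ℂ :=
  m * (log (muRoot lam m x + 1) - muRoot lam m x - log 2 + 1)

lemma mu_eq_exp_muExponent (lam : ℂ) (m : ℕ) (x : ℝ) :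
    mu lam m x = exp (muExponent lam m x) := rfl

section muRoot

variable {lam : ℂ} {m : ℕ} {x : ℝ}

lemma two_thirds_le_re_of_three_mul_sq_le (hm : m ≠ 0) (h : 3 * ‖lam‖ * x ^ 2 ≤ m ^ 2) :
    2 / 3 ≤ (1 - lam * (x : ℂ) ^ 2 / (m : ℂ) ^ 2).re := by
  have hm' : (0 : ℝ) < m := by positivity
  have hnorm : ‖lam * (x : ℂ) ^ 2 / (m : ℂ) ^ 2‖ ≤ 1 / 3 := by
    rw [norm_div, norm_mul, norm_pow, norm_pow, norm_real, Real.norm_eq_abs, sq_abs,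
      norm_natCast, div_le_iff₀ (by positivity)]
    linarith
  have := re_le_norm (lam * (x : ℂ) ^ 2 / (m : ℂ) ^ 2)
  rw [sub_re, one_re]
  linarith

lemma four_fifths_le_re_muRoot (hm : m ≠ 0) (h : 3 * ‖lam‖ * x ^ 2 ≤ m ^ 2) :
    4 / 5 ≤ (muRoot lam m x).re := by
  refine le_trans ?_ (sqrt_re_le_re_cpow_one_half _)
  rw [Real.le_sqrt (by norm_num) (by linarith [two_thirds_le_re_of_three_mul_sq_le hm h])]
  linarith [two_thirds_le_re_of_three_mul_sq_le hm h]

lemma natCast_mul_muRoot_sq (hm : m ≠ 0) :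
    ((m : ℂ) * muRoot lam m x) ^ 2 = (m : ℂ) ^ 2 - lam * (x : ℂ) ^ 2 := by
  have : (m : ℂ) ≠ 0 := Nat.cast_ne_zero.2 hm
  rw [mul_pow, muRoot, cpow_one_half_sq]
  field_simp

lemma hasDerivAt_re_muExponent (hm : m ≠ 0) (hz : 0 < (1 - lam * (x : ℂ) ^ 2 / (m : ℂ) ^ 2).re) :
    HasDerivAt (fun y => (muExponent lam m y).re)
      (lam * x / (m * (muRoot lam m x + 1))).re x := by
  have hmC : (m : ℂ) ≠ 0 := Nat.cast_ne_zero.2 hm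
  have hZ : HasDerivAt (fun ζ : ℂ => 1 - lam * ζ ^ 2 / (m : ℂ) ^ 2)
      (-(lam * (2 * (x : ℂ) ^ 1 * 1) / (m : ℂ) ^ 2)) x :=
    ((((hasDerivAt_id (x : ℂ)).pow 2).const_mul lam).div_const _).const_sub 1
  have hE := (((hasDerivAt_log_cpow_one_half_add_one_sub
    (mem_slitPlane_iff.2 (Or.inl hz))).comp (x : ℂ) hZ).sub_const (log 2) |>.add_const 1).const_mul
      (m : ℂ)
  refine hE.real_of_complex.congr_deriv ?_
  have hne := slitPlane_ne_zero (cpow_one_half_add_one_mem_slitPlane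
    (1 - lam * (x : ℂ) ^ 2 / (m : ℂ) ^ 2))
  simp only [muRoot]
  congr 1
  field_simp

end muRoot

lemma norm_inv_sub_inv_le {M₁ M₂ c : ℝ} {w₁ w₂ t : ℂ} (hM₁ : 0 < M₁) (hM₂ : 0 < M₂)
    (hc : 0 < c) (hw₁ : c ≤ w₁.re) (hw₂ : c ≤ w₂.re)
    (h₁ : ((M₁ : ℂ) * w₁) ^ 2 = (M₁ : ℂ) ^ 2 - t) (h₂ : ((M₂ : ℂ) * w₂) ^ 2 = (M₂ : ℂ) ^ 2 - t) :
    ‖((M₂ : ℂ) * (w₂ + 1))⁻¹ - ((M₁ : ℂ) * (w₁ + 1))⁻¹‖ ≤ (1 + c⁻¹) * |M₂ - M₁| / (M₁ * M₂) := by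
  set a : ℂ := M₁ * w₁
  set b : ℂ := M₂ * w₂
  have hab : c * (M₁ + M₂) ≤ ‖a + b‖ := by
    refine le_trans ?_ (re_le_norm _)
    simp only [a, b, add_re, re_ofReal_mul]
    nlinarith
  -- `a - b = (M₁² - M₂²) / (a + b)`, and `a + b` stays away from `0`
  have hdiff : ‖a - b‖ ≤ c⁻¹ * |M₂ - M₁| := by
    have hprod : (a - b) * (a + b) = ((M₁ - M₂) * (M₁ + M₂) : ℝ) := by
      push_cast; linear_combination h₁ - h₂
    have := congrArg norm hprod
    rw [norm_mul, norm_real, Real.norm_eq_abs, abs_mul, abs_of_pos (by positivity : 0 < M₁ + M₂),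
      abs_sub_comm] at this
    rw [inv_mul_eq_div, le_div_iff₀ hc]
    nlinarith [norm_nonneg (a - b)]
  have hp {M : ℝ} {w : ℂ} (hM : 0 < M) (hw : 0 < w.re) : M ≤ ‖(M : ℂ) * (w + 1)‖ := by
    rw [norm_mul, norm_real, Real.norm_eq_abs, abs_of_pos hM]
    exact le_mul_of_one_le_right hM.le
      ((by simpa using hw.le : 1 ≤ (w + 1).re).trans (re_le_norm _))
  have hp₁ := hp hM₁ (hc.trans_le hw₁)
  have hp₂ := hp hM₂ (hc.trans_le hw₂)
  have hnum : ‖(M₁ : ℂ) * (w₁ + 1) - M₂ * (w₂ + 1)‖ ≤ (1 + c⁻¹) * |M₂ - M₁| := by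
    calc ‖(M₁ : ℂ) * (w₁ + 1) - M₂ * (w₂ + 1)‖ = ‖(a - b) + ((M₁ - M₂ : ℝ) : ℂ)‖ := by
          simp only [a, b]; push_cast; ring_nf
      _ ≤ c⁻¹ * |M₂ - M₁| + |M₂ - M₁| := by
          refine (norm_add_le _ _).trans (add_le_add hdiff ?_)
          rw [norm_real, Real.norm_eq_abs, abs_sub_comm]
      _ = (1 + c⁻¹) * |M₂ - M₁| := by ring
  rw [inv_sub_inv (norm_pos_iff.1 (hM₂.trans_le hp₂)) (norm_pos_iff.1 (hM₁.trans_le hp₁)),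
    norm_div, norm_mul]
  exact div_le_div₀ (by positivity) hnum (by positivity) (by nlinarith)

/-- `log ‖r^{-j} μ_{m+j}(r) / μ_m(r)‖`, the logarithm of `|g|` up to the normalisation `d`. -/
def logNormRatio (lam : ℂ) (m j : ℕ) (y : ℝ) : ℝ :=
  (muExponent lam (m + j) y).re - (muExponent lam m y).re - j * Real.log y

lemma norm_muExponent_deriv_sub_le {lam : ℂ} {m j : ℕ} {x : ℝ} (hx : 0 < x) (hm : m ≠ 0)
    (h : 3 * ‖lam‖ * x ^ 2 ≤ m ^ 2) :
    ‖lam * x / (((m + j : ℕ) : ℂ) * (muRoot lam (m + j) x + 1)) -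
      lam * x / ((m : ℂ) * (muRoot lam m x + 1))‖ ≤ 3 * j / (4 * x) := by
  have hmj : m + j ≠ 0 := by omega
  have h' : 3 * ‖lam‖ * x ^ 2 ≤ ((m + j : ℕ) : ℝ) ^ 2 := h.trans (by push_cast; gcongr; simp)
  have hinv := norm_inv_sub_inv_le (by positivity) (by positivity) (by norm_num : (0 : ℝ) < 4 / 5)
    (four_fifths_le_re_muRoot hm h) (four_fifths_le_re_muRoot hmj h')
    (natCast_mul_muRoot_sq hm) (natCast_mul_muRoot_sq hmj)
  have hDeq : lam * x / (((m + j : ℕ) : ℂ) * (muRoot lam (m + j) x + 1)) -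
      lam * x / ((m : ℂ) * (muRoot lam m x + 1)) =
      lam * x * (((((m + j : ℕ) : ℝ) : ℂ) * (muRoot lam (m + j) x + 1))⁻¹ -
        (((m : ℝ) : ℂ) * (muRoot lam m x + 1))⁻¹) := by
    simp only [ofReal_natCast]; ring
  rw [hDeq, norm_mul, norm_mul, norm_real, Real.norm_eq_abs, abs_of_pos hx]
  push_cast at hinv ⊢
  rw [add_sub_cancel_left, abs_of_nonneg (Nat.cast_nonneg j)] at hinv
  have hm' : (0 : ℝ) < m := by positivity
  calc ‖lam‖ * x * _ ≤ ‖lam‖ * x * ((1 + (4 / 5)⁻¹) * j / (m * (m + j))) := by gcongr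
    _ = 9 / 4 * j * (‖lam‖ * x ^ 2) / (x * (m * (m + j))) := by field_simp; ring
    _ ≤ 9 / 4 * j * (m * (m + j) / 3) / (x * (m * (m + j))) := by
      gcongr; nlinarith [(Nat.cast_nonneg j : (0 : ℝ) ≤ j)]
    _ = 3 * j / (4 * x) := by field_simp; ring

lemma hasDerivAt_logNormRatio {lam : ℂ} {m j : ℕ} {x : ℝ} (hx : 0 < x) (hm : m ≠ 0)
    (h : 3 * ‖lam‖ * x ^ 2 ≤ m ^ 2) :
    ∃ d, HasDerivAt (logNormRatio lam m j) d x ∧ d ∈ Set.Icc (-(7 * j / (4 * x))) 0 := by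
  have hmj : m + j ≠ 0 := by omega
  have h' : 3 * ‖lam‖ * x ^ 2 ≤ ((m + j : ℕ) : ℝ) ^ 2 := h.trans (by push_cast; gcongr; simp)
  have hre_pos {m : ℕ} (hm : m ≠ 0) (h : 3 * ‖lam‖ * x ^ 2 ≤ m ^ 2) :
      0 < (1 - lam * (x : ℂ) ^ 2 / (m : ℂ) ^ 2).re :=
    lt_of_lt_of_le (by norm_num) (two_thirds_le_re_of_three_mul_sq_le hm h)
  have hdiff := (hasDerivAt_re_muExponent hmj (hre_pos hmj h')).sub
    (hasDerivAt_re_muExponent hm (hre_pos hm h)) |>.sub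
    ((Real.hasDerivAt_log hx.ne').const_mul (j : ℝ))
  refine ⟨_, hdiff, ?_⟩
  have hre := abs_le.1 ((abs_re_le_norm _).trans (norm_muExponent_deriv_sub_le (j := j) hx hm h))
  rw [sub_re] at hre
  have hjx : 0 ≤ (j : ℝ) / x := by positivity
  rw [show 3 * (j : ℝ) / (4 * x) = 3 / 4 * (j / x) by ring] at hre
  rw [show 7 * (j : ℝ) / (4 * x) = 7 / 4 * (j / x) by ring, ← div_eq_mul_inv]
  constructor <;> linarith

lemma norm_eq_exp_logNormRatio (lam : ℂ) (m j : ℕ) {s r : ℝ} (hs : 0 < s) (hr : 0 < r) :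
    ‖(s : ℂ) ^ j * (mu lam m s / mu lam (m + j) s) * (r : ℂ) ^ (-(j : ℤ)) *
        (mu lam (m + j) r / mu lam m r)‖ =
      Real.exp (logNormRatio lam m j r - logNormRatio lam m j s) := by
  have hexp (y : ℝ) (hy : 0 < y) : Real.exp (logNormRatio lam m j y) =
      ‖mu lam (m + j) y‖ / ‖mu lam m y‖ / y ^ j := by
    rw [logNormRatio, ← Real.log_pow, Real.exp_sub, Real.exp_sub, Real.exp_log (by positivity),
      mu_eq_exp_muExponent, mu_eq_exp_muExponent, norm_exp, norm_exp]
  have hmu (m : ℕ) (y : ℝ) : 0 < ‖mu lam m y‖ := norm_pos_iff.2 (exp_ne_zero _)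
  have := hmu m s; have := hmu (m + j) s; have := hmu m r; have := hmu (m + j) r
  rw [Real.exp_sub, hexp r hr, hexp s hs]
  simp only [norm_mul, norm_div, norm_inv, norm_pow, norm_real, Real.norm_eq_abs, abs_of_pos hs,
    abs_of_pos hr, zpow_neg, zpow_natCast]
  field_simp

lemma sub_mem_Icc_of_hasDerivAt_mem_Icc {f : ℝ → ℝ} {a b K : ℝ}
    (hf : ∀ x ∈ Set.Icc a b, ∃ d, HasDerivAt f d x ∧ d ∈ Set.Icc (-K) 0) {r : ℝ}
    (hr : r ∈ Set.Icc a b) : f r - f a ∈ Set.Icc (-K * (r - a)) 0 := by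
  choose! f' hf' hbound using hf
  have hcont : ContinuousOn f (Set.Icc a b) := fun x hx =>
    (hf' x hx).continuousAt.continuousWithinAt
  have hdiff : DifferentiableOn ℝ f (interior (Set.Icc a b)) := fun x hx =>
    (hf' x (interior_subset hx)).differentiableAt.differentiableWithinAt
  have hderiv (x) (hx : x ∈ interior (Set.Icc a b)) : deriv f x ∈ Set.Icc (-K) 0 := by
    rw [(hf' x (interior_subset hx)).deriv]; exact hbound x (interior_subset hx)
  have ha : a ∈ Set.Icc a b := ⟨le_rfl, hr.1.trans hr.2⟩
  refine ⟨(convex_Icc a b).mul_sub_le_image_sub_of_le_deriv hcont hdiff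
    (fun x hx => (hderiv x hx).1) a ha r hr hr.1, ?_⟩
  simpa using (convex_Icc a b).image_sub_le_mul_sub_of_deriv_le hcont hdiff
    (fun x hx => (hderiv x hx).2) a ha r hr hr.1

lemma logNormRatio_sub_mem_Icc {lam : ℂ} {m j : ℕ} {a b r : ℝ} (ha : 0 < a) (hm : m ≠ 0)
    (hb : 3 * ‖lam‖ * b ^ 2 ≤ m ^ 2) (hr : r ∈ Set.Icc a b) :
    logNormRatio lam m j r - logNormRatio lam m j a ∈ Set.Icc (-(7 * j / (4 * a)) * (r - a)) 0 :=
  sub_mem_Icc_of_hasDerivAt_mem_Icc (fun x hx => by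
    have hx₀ : 0 < x := ha.trans_le hx.1
    obtain ⟨d, hd, hdI⟩ := hasDerivAt_logNormRatio (j := j) hx₀ hm
      (le_trans (by gcongr; exact hx.2) hb)
    exact ⟨d, hd, le_trans (by gcongr; exact hx.1) hdI.1, hdI.2⟩) hr

lemma annulus_parameter_bounds {L t n k : ℝ} (hL : 1 ≤ L) (ht : 1000 ≤ t)
    (hn : |n - 2 * L * t ^ 2| ≤ 1) (hk : |k - 12 * L * t| ≤ 1) :
    2 * k < n ∧ 3 * L ^ 2 * (t ^ 2 + 4 * t) ^ 2 ≤ (n - 2 * k) ^ 2 ∧ 7 * k / t ≤ 100 * L := by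
  obtain ⟨hn₁, -⟩ := abs_le.1 hn
  obtain ⟨-, hk₂⟩ := abs_le.1 hk
  have hLt : 1000 ≤ L * t := by nlinarith
  have hgap : 7 / 4 * L * (t ^ 2 + 4 * t) ≤ n - 2 * k := by
    nlinarith [mul_nonneg (by positivity : 0 ≤ L * t) (by linarith : 0 ≤ t - 1000)]
  refine ⟨by nlinarith, ?_, ?_⟩
  · calc 3 * L ^ 2 * (t ^ 2 + 4 * t) ^ 2 ≤ (7 / 4 * L * (t ^ 2 + 4 * t)) ^ 2 := by
          nlinarith [sq_nonneg (L * (t ^ 2 + 4 * t))]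
      _ ≤ (n - 2 * k) ^ 2 := by gcongr
  · rw [div_le_iff₀ (by positivity)]
    nlinarith

theorem stmt18 (lam : ℂ) :
    ∃ (C ρ₀ : ℝ), 0 < C ∧ 0 < ρ₀ ∧
      ∀ ρ : ℝ, ρ₀ ≤ ρ → ∀ n k : ℕ,
        |(n : ℝ) - 2 * Real.sqrt (max 1 ‖lam‖) * ρ| ≤ 1 →
        |(k : ℝ) - 12 * Real.sqrt (max 1 ‖lam‖) * Real.sqrt ρ| ≤ 1 →
        ∀ r ∈ Set.Icc (ρ + 3 * Real.sqrt ρ) (ρ + 4 * Real.sqrt ρ),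
          Real.exp (-C) ≤
            ‖(((ρ + 3 * Real.sqrt ρ : ℝ) : ℂ) ^ (4 * k) *
                (mu lam (n - 2 * k) (ρ + 3 * Real.sqrt ρ) /
                  mu lam (n + 2 * k) (ρ + 3 * Real.sqrt ρ))) *
              (r : ℂ) ^ (-(4 * k : ℤ)) * (mu lam (n + 2 * k) r / mu lam (n - 2 * k) r)‖ ∧
          ‖(((ρ + 3 * Real.sqrt ρ : ℝ) : ℂ) ^ (4 * k) *
                (mu lam (n - 2 * k) (ρ + 3 * Real.sqrt ρ) /
                  mu lam (n + 2 * k) (ρ + 3 * Real.sqrt ρ))) *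
              (r : ℂ) ^ (-(4 * k : ℤ)) * (mu lam (n + 2 * k) r / mu lam (n - 2 * k) r)‖ ≤ 1 := by
  set L := √(max 1 ‖lam‖)
  have hL : 1 ≤ L := Real.one_le_sqrt.2 (le_max_left _ _)
  have hlam : ‖lam‖ ≤ L ^ 2 := by
    rw [Real.sq_sqrt (by positivity)]; exact le_max_right _ _
  refine ⟨100 * L, 10 ^ 6, by positivity, by norm_num, fun ρ hρ n k hn hk r hr => ?_⟩
  set t := √ρ
  have ht : 1000 ≤ t := Real.le_sqrt_of_sq_le (by linarith)
  have hρt : ρ = t ^ 2 := (Real.sq_sqrt (by linarith)).symm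
  rw [hρt] at hn
  obtain ⟨h2k, hsmall, hC⟩ := annulus_parameter_bounds hL ht hn hk
  have h2k' : 2 * k < n := by exact_mod_cast h2k
  have hm : ((n - 2 * k : ℕ) : ℝ) = n - 2 * k := by push_cast [Nat.cast_sub h2k'.le]; ring
  rw [show n + 2 * k = n - 2 * k + 4 * k by omega, show -(4 * k : ℤ) = -((4 * k : ℕ) : ℤ) by simp,
    norm_eq_exp_logNormRatio _ _ _ (by positivity) (by linarith [hr.1])]
  have hG := logNormRatio_sub_mem_Icc (lam := lam) (m := n - 2 * k) (j := 4 * k)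
    (by positivity) (by omega) (by rw [hm]; refine le_trans ?_ hsmall; rw [hρt]; gcongr) hr
  refine ⟨Real.exp_le_exp.2 (le_trans ?_ hG.1), Real.exp_le_one_iff.2 hG.2⟩
  calc -(100 * L) ≤ -(7 * k / t ^ 2 * t) := by
        rw [neg_le_neg_iff, sq, ← div_div, div_mul_cancel₀ _ (by positivity)]; exact hC
    _ ≤ -(7 * ((4 * k : ℕ) : ℝ) / (4 * (ρ + 3 * t))) * (r - (ρ + 3 * t)) := by
        rw [neg_mul, neg_le_neg_iff, Nat.cast_mul, Nat.cast_ofNat, mul_left_comm,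
          mul_div_mul_left _ _ four_ne_zero, ← hρt]
        gcongr <;> linarith [hr.1, hr.2]
end
end
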